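/- Let G ⊆ M₂(ℝ̄) be a subsemigroup that is a group under ⊗ (its identity element being some idempotent of M₂(ℝ̄), not necessarily the identity matrix). Then either G is torsion-free abelian, or G contains a torsion-free abelian subgroup of index 2. Consequently, every group admitting a faithful representation by 2 × 2 tropical matrices is torsion-free abelian or has a torsion-free abelian subgroup of index 2. -/

import Mathlib

open scoped Classical ENNReal

/-- The tropical semiring `ℝ̄ = ℝ ∪ {-∞}`, carried by `WithBot ℝ`;
tropical addition is `max` and tropical multiplication is `+`. -/
abbrev Rb : Type := WithBot ℝ

/-- Tropical matrix multiplication. -/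
noncomputable def tMul {n : ℕ} (A B : Fin n → Fin n → Rb) : Fin n → Fin n → Rb :=
  fun i j => Finset.univ.sup fun k => A i k + B k j

/-- The column space of a matrix: all tropical linear combinations of its columns. -/
def ColSpace {n : ℕ} (A : Fin n → Fin n → Rb) : Set (Fin n → Rb) :=
  {v | ∃ c : Fin n → Rb, ∀ i, v i = Finset.univ.sup fun j => c j + A i j}

/-- The row space of a matrix: all tropical linear combinations of its rows. -/
def RowSpace {n : ℕ} (A : Fin n → Fin n → Rb) : Set (Fin n → Rb) :=
  {v | ∃ c : Fin n → Rb, ∀ j, v j = Finset.univ.sup fun i => c i + A i j}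

abbrev Mat2 : Type := Fin 2 → Fin 2 → Rb

/-- Inclusion of `ℝ̄` into the projective line `ℝ̂ = ℝ ∪ {-∞, +∞}` (modelled by `EReal`). -/
noncomputable def toE : Rb → EReal := WithBot.recBotCoe ⊥ (fun r : ℝ => (r : EReal))

/-- Projection of a vector `(a, b)` to `b - a ∈ ℝ̂`. -/
noncomputable def projPt (v : Fin 2 → Rb) : EReal := toE (v 1) - toE (v 0)

def zeroVec : Fin 2 → Rb := fun _ => ⊥

/-- Projective column space. -/
noncomputable def PC (A : Mat2) : Set EReal :=
  {z | ∃ v ∈ ColSpace A, v ≠ zeroVec ∧ projPt v = z}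

/-- Projective row space. -/
noncomputable def PR (A : Mat2) : Set EReal :=
  {z | ∃ v ∈ RowSpace A, v ≠ zeroVec ∧ projPt v = z}

/-- The metric `δ` on `ℝ̂`. -/
noncomputable def delta (x y : EReal) : ℝ≥0∞ :=
  if (∃ a : ℝ, x = (a : EReal)) ∧ (∃ b : ℝ, y = (b : EReal)) then
    ENNReal.ofReal |x.toReal - y.toReal|
  else if x = y then 0 else ⊤

/-- `M` embeds isometrically into `N`. -/
def IsomEmbed (M N : Set EReal) : Prop :=
  ∃ f : EReal → EReal, Set.MapsTo f M N ∧ Set.InjOn f M ∧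
    ∀ x ∈ M, ∀ y ∈ M, delta (f x) (f y) = delta x y

/-- `M` and `N` are isometric. -/
def Isom (M N : Set EReal) : Prop :=
  ∃ f : EReal → EReal, Set.BijOn f M N ∧
    ∀ x ∈ M, ∀ y ∈ M, delta (f x) (f y) = delta x y

/-- Closed convex subsets of `ℝ̂`: the empty set, singletons and closed intervals. -/
def IsClosedConvex (S : Set EReal) : Prop :=
  S = ∅ ∨ ∃ x y : EReal, x ≤ y ∧ S = Set.Icc x y

/-- A subsemigroup `G` of `M₂(ℝ̄)` which is a group under `⊗` with identity `E` (an
idempotent of `M₂(ℝ̄)`, not necessarily the identity matrix). -/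
noncomputable def IsGroupWith (G : Set Mat2) (E : Mat2) : Prop :=
  E ∈ G ∧ (∀ A ∈ G, ∀ B ∈ G, tMul A B ∈ G) ∧
    (∀ A ∈ G, tMul E A = A ∧ tMul A E = A) ∧
    (∀ A ∈ G, ∃ B ∈ G, tMul A B = E ∧ tMul B A = E)

/-- `tpow A n = A^(n+1)`, the `(n+1)`-st tropical power of `A`. -/
noncomputable def tpow (A : Mat2) : ℕ → Mat2
  | 0 => A
  | n + 1 => tMul A (tpow A n)

/-- A subset is abelian under `⊗`. -/
noncomputable def IsAbelianOn (G : Set Mat2) : Prop :=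
  ∀ A ∈ G, ∀ B ∈ G, tMul A B = tMul B A

/-- A group `(G, ⊗, E)` is torsion-free: no nonidentity element has a positive power
equal to the identity. -/
noncomputable def IsTorsionFreeOn (G : Set Mat2) (E : Mat2) : Prop :=
  ∀ A ∈ G, ∀ n : ℕ, tpow A n = E → A = E

/-- Old Mathlib `Monoid.IsTorsionFree` (removed upstream): no nontrivial element has
finite order. -/
def Monoid.IsTorsionFree (G : Type*) [Monoid G] : Prop :=
  ∀ g : G, g ≠ 1 → ¬IsOfFinOrder g

/-!
An idempotent `E` of `M₂(ℝ̄)` either has rank one, `E i j = u i + v j`, or has zero diagonal and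
off-diagonal entries `b, c` with `b + c < 0`. In the first case every element of a group with
identity `E` is `A = E ⊗ A ⊗ E = λ ⊗ E`, so the group consists of tropical scalar multiples of `E`.
In the second case, comparing entries of `A ⊗ B = E = B ⊗ A` shows `A = M ⊗ E = E ⊗ M` for a
monomial matrix `M` with real entries. Whether `M` is diagonal is a homomorphism to `ℤ/2`, and its
kernel `{diag(p, s) ⊗ E}` embeds into `(ℝ², +)`. Pulling this back along a faithful representation
gives the statement for abstract groups.
-/

open Finset

lemma Finset.sup_add_withBot {α ι : Type*} [AddCommMonoid α] [LinearOrder α]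
    [IsOrderedAddMonoid α] (s : Finset ι) (f : ι → WithBot α) (a : WithBot α) :
    s.sup f + a = s.sup fun i => f i + a :=
  apply_sup_eq_sup_comp_of_linearOrder (· + a) (fun _ _ h => add_le_add_left h a)
    (WithBot.bot_add a)

lemma Finset.add_sup_withBot {α ι : Type*} [AddCommMonoid α] [LinearOrder α]
    [IsOrderedAddMonoid α] (s : Finset ι) (f : ι → WithBot α) (a : WithBot α) :
    a + s.sup f = s.sup fun i => a + f i :=
  apply_sup_eq_sup_comp_of_linearOrder (a + ·) (fun _ _ h => add_le_add_right h a)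
    (WithBot.add_bot a)

section SquareMatrices

variable {n : ℕ}

theorem tMul_assoc (A B C : Fin n → Fin n → Rb) : tMul (tMul A B) C = tMul A (tMul B C) := by
  funext i j
  simp only [tMul, Finset.sup_add_withBot, Finset.add_sup_withBot, add_assoc]
  exact Finset.sup_comm _ _ _

theorem le_tMul_apply (A B : Fin n → Fin n → Rb) (i k j : Fin n) :
    A i k + B k j ≤ tMul A B i j :=
  Finset.le_sup (f := fun k => A i k + B k j) (Finset.mem_univ k)

theorem add_le_of_tMul_eq {A B C : Fin n → Fin n → Rb} (h : tMul A B = C) (i k j : Fin n) :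
    A i k + B k j ≤ C i j :=
  (le_tMul_apply A B i k j).trans_eq (congrFun (congrFun h i) j)

def tSmul (l : Rb) (A : Fin n → Fin n → Rb) : Fin n → Fin n → Rb := fun i j => l + A i j

theorem tSmul_tMul (l : Rb) (A B : Fin n → Fin n → Rb) :
    tMul (tSmul l A) B = tSmul l (tMul A B) := by
  funext i j
  simp only [tMul, tSmul, Finset.add_sup_withBot, add_assoc]

theorem tMul_tSmul (l : Rb) (A B : Fin n → Fin n → Rb) :
    tMul A (tSmul l B) = tSmul l (tMul A B) := by
  funext i j
  simp only [tMul, tSmul, Finset.add_sup_withBot, add_left_comm l]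

theorem tSmul_tSmul (l m : Rb) (A : Fin n → Fin n → Rb) :
    tSmul l (tSmul m A) = tSmul (l + m) A := by
  funext i j
  exact (add_assoc l m (A i j)).symm

theorem zero_tSmul (A : Fin n → Fin n → Rb) : tSmul 0 A = A := by
  funext i j
  exact zero_add _

theorem tMul_tMul_eq_tSmul_of_rankOne {E A : Fin n → Fin n → Rb} {u v : Fin n → Rb}
    (hE : ∀ i j, E i j = u i + v j) :
    tMul (tMul E A) E = tSmul (univ.sup fun k => univ.sup fun l => v k + A k l + u l) E := by
  funext i j
  simp only [tMul, tSmul, hE, Finset.sup_add_withBot]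
  rw [Finset.sup_comm]
  exact Finset.sup_congr rfl fun k _ => Finset.sup_congr rfl fun l _ => by abel

end SquareMatrices

theorem tMul_apply_fin_two (A B : Mat2) (i j : Fin 2) :
    tMul A B i j = max (A i 0 + B 0 j) (A i 1 + B 1 j) := by
  simp [tMul, Fin.univ_succ, max_def]

theorem tpow_tSmul {E : Mat2} (hE : tMul E E = E) (l : Rb) (n : ℕ) :
    tpow (tSmul l E) n = tSmul ((n + 1) • l) E := by
  induction n with
  | zero => simp [tpow]
  | succ n ih => rw [tpow, ih, tSmul_tMul, tMul_tSmul, hE, tSmul_tSmul, succ_nsmul' l (n + 1)]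

namespace IsGroupWith

variable {G : Set Mat2} {E : Mat2}

theorem id_mem (hG : IsGroupWith G E) : E ∈ G := hG.1

theorem tMul_mem (hG : IsGroupWith G E) {A B : Mat2} (hA : A ∈ G) (hB : B ∈ G) :
    tMul A B ∈ G := hG.2.1 A hA B hB

theorem id_tMul (hG : IsGroupWith G E) {A : Mat2} (hA : A ∈ G) : tMul E A = A :=
  (hG.2.2.1 A hA).1

theorem tMul_id (hG : IsGroupWith G E) {A : Mat2} (hA : A ∈ G) : tMul A E = A :=
  (hG.2.2.1 A hA).2

theorem idem (hG : IsGroupWith G E) : tMul E E = E := hG.id_tMul hG.id_mem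

theorem exists_inv (hG : IsGroupWith G E) {A : Mat2} (hA : A ∈ G) :
    ∃ B ∈ G, tMul A B = E ∧ tMul B A = E := hG.2.2.2 A hA

end IsGroupWith

/-- `D` is a homomorphism from `G` to `ℤ/2`, with `D A` meaning "`A` is even". -/
def IsParityOn (G : Set Mat2) (D : Mat2 → Prop) : Prop :=
  ∀ A ∈ G, ∀ B ∈ G, (D (tMul A B) ↔ (D A ↔ D B))

section Parity

variable {G : Set Mat2} {E : Mat2} {D : Mat2 → Prop}

theorem IsParityOn.apply_id (hG : IsGroupWith G E) (hD : IsParityOn G D) : D E := by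
  have h := hD E hG.id_mem E hG.id_mem
  rw [hG.idem] at h
  exact h.2 Iff.rfl

theorem IsParityOn.iff_of_tMul_eq_id (hG : IsGroupWith G E) (hD : IsParityOn G D)
    {A B : Mat2} (hA : A ∈ G) (hB : B ∈ G) (hAB : tMul A B = E) : D A ↔ D B := by
  have h := hD A hA B hB
  rw [hAB] at h
  exact h.1 (hD.apply_id hG)

theorem IsGroupWith.sep (hG : IsGroupWith G E) (hD : IsParityOn G D) :
    IsGroupWith {A ∈ G | D A} E := by
  refine ⟨⟨hG.id_mem, hD.apply_id hG⟩, fun A hA B hB => ⟨hG.tMul_mem hA.1 hB.1, ?_⟩,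
    fun A hA => ⟨hG.id_tMul hA.1, hG.tMul_id hA.1⟩, fun A hA => ?_⟩
  · exact (hD A hA.1 B hB.1).2 (iff_of_true hA.2 hB.2)
  · obtain ⟨B, hB, hAB, hBA⟩ := hG.exists_inv hA.1
    exact ⟨B, ⟨hB, (hD.iff_of_tMul_eq_id hG hA.1 hB hAB).1 hA.2⟩, hAB, hBA⟩

theorem IsGroupWith.abelian_or_index_two (hG : IsGroupWith G E) (hD : IsParityOn G D)
    (hab : IsAbelianOn {A ∈ G | D A}) (htf : IsTorsionFreeOn {A ∈ G | D A} E) :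
    (IsAbelianOn G ∧ IsTorsionFreeOn G E) ∨
      (∃ H : Set Mat2, H ⊆ G ∧ IsGroupWith H E ∧ IsAbelianOn H ∧ IsTorsionFreeOn H E ∧
        ∃ g ∈ G, g ∉ H ∧ ∀ x ∈ G, x ∈ H ∨ ∃ h ∈ H, x = tMul g h) := by
  by_cases hall : ∀ A ∈ G, D A
  · have hGD : {A ∈ G | D A} = G := Set.sep_eq_self_iff_mem_true.mpr hall
    rw [hGD] at hab htf
    exact Or.inl ⟨hab, htf⟩
  push Not at hall
  obtain ⟨g, hg, hgD⟩ := hall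
  refine Or.inr ⟨_, Set.sep_subset G D, hG.sep hD, hab, htf, g, hg, fun h => hgD h.2,
    fun x hx => or_iff_not_imp_left.2 fun hxD => ?_⟩
  obtain ⟨g', hg', hgg', -⟩ := hG.exists_inv hg
  have hg'D : ¬D g' := mt (hD.iff_of_tMul_eq_id hG hg hg' hgg').2 hgD
  refine ⟨tMul g' x, ⟨hG.tMul_mem hg' hx, (hD g' hg' x hx).2 ?_⟩, ?_⟩
  · exact iff_of_false hg'D fun h => hxD ⟨hx, h⟩
  · rw [← tMul_assoc, hgg', hG.id_tMul hx]

end Parity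

section Representation

variable {Γ : Type*} [Group Γ] {f : Γ → Mat2}

theorem isGroupWith_range (hmul : ∀ a b, f (a * b) = tMul (f a) (f b)) :
    IsGroupWith (Set.range f) (f 1) := by
  refine ⟨⟨1, rfl⟩, ?_, ?_, ?_⟩
  · rintro - ⟨a, rfl⟩ - ⟨b, rfl⟩
    exact ⟨a * b, hmul a b⟩
  · rintro - ⟨a, rfl⟩
    simp only [← hmul, one_mul, mul_one, and_self]
  · rintro - ⟨a, rfl⟩
    exact ⟨f a⁻¹, ⟨a⁻¹, rfl⟩, by rw [← hmul, mul_inv_cancel], by rw [← hmul, inv_mul_cancel]⟩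

theorem tpow_eq_pow_succ (hmul : ∀ a b, f (a * b) = tMul (f a) (f b)) (g : Γ) (n : ℕ) :
    tpow (f g) n = f (g ^ (n + 1)) := by
  induction n with
  | zero => rw [pow_one]; rfl
  | succ n ih => rw [tpow, ih, ← hmul, ← pow_succ']

theorem abelian_or_index_two_of_injective (hf : Function.Injective f)
    (hmul : ∀ a b, f (a * b) = tMul (f a) (f b)) {D : Mat2 → Prop}
    (hD : IsParityOn (Set.range f) D) (hab : IsAbelianOn {A ∈ Set.range f | D A})
    (htf : IsTorsionFreeOn {A ∈ Set.range f | D A} (f 1)) :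
    ((∀ a b : Γ, a * b = b * a) ∧ Monoid.IsTorsionFree Γ) ∨
      (∃ H : Subgroup Γ, H.index = 2 ∧ (∀ a b : H, a * b = b * a) ∧ Monoid.IsTorsionFree H) := by
  have hpar (a b : Γ) : D (f (a * b)) ↔ (D (f a) ↔ D (f b)) := by
    rw [hmul]; exact hD _ ⟨a, rfl⟩ _ ⟨b, rfl⟩
  have hcomm (a b : Γ) (ha : D (f a)) (hb : D (f b)) : a * b = b * a :=
    hf (by rw [hmul, hmul]; exact hab _ ⟨⟨a, rfl⟩, ha⟩ _ ⟨⟨b, rfl⟩, hb⟩)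
  have htors (g : Γ) (hg : D (f g)) (hfin : IsOfFinOrder g) : g = 1 := by
    obtain ⟨n, hn, hgn⟩ := isOfFinOrder_iff_pow_eq_one.mp hfin
    obtain ⟨m, rfl⟩ := Nat.exists_eq_succ_of_ne_zero hn.ne'
    exact hf (htf _ ⟨⟨g, rfl⟩, hg⟩ m (by rw [tpow_eq_pow_succ hmul, hgn]))
  by_cases hall : ∀ a, D (f a)
  · exact Or.inl ⟨fun a b => hcomm a b (hall a) (hall b),
      fun g hg1 hfin => hg1 (htors g (hall g) hfin)⟩
  push Not at hall
  obtain ⟨a₀, ha₀⟩ := hall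
  have hone : D (f 1) := hD.apply_id (isGroupWith_range hmul)
  let H : Subgroup Γ :=
    { carrier := {a | D (f a)}
      mul_mem' := fun ha hb => (hpar _ _).2 (iff_of_true ha hb)
      one_mem' := hone
      inv_mem' := fun {a} ha => ((hpar a a⁻¹).1 (by rwa [mul_inv_cancel])).1 ha }
  refine Or.inr ⟨H, Subgroup.index_eq_two_iff.2 ⟨a₀, fun b => ?_⟩,
    fun a b => Subtype.ext (hcomm a b a.2 b.2),
    fun g hg1 hfin => hg1 (Subtype.ext (htors g g.2 (Submonoid.isOfFinOrder_coe.2 hfin)))⟩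
  change Xor (D (f (b * a₀))) (D (f b))
  rw [hpar]
  tauto

end Representation

theorem tSmul_eq_self_of_nsmul {E : Mat2} {l : Rb} {k : ℕ} (hk : k ≠ 0)
    (h : tSmul (k • l) E = E) : tSmul l E = E := by
  induction l using WithBot.recBotCoe with
  | bot =>
    obtain ⟨k, rfl⟩ := Nat.exists_eq_succ_of_ne_zero hk
    rwa [succ_nsmul, WithBot.add_bot] at h
  | coe x =>
    by_cases hE : ∃ i j, E i j ≠ ⊥
    · obtain ⟨i, j, hij⟩ := hE
      have hkx : E i j + ↑(k • x) = E i j + ↑(0 : ℝ) := by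
        rw [WithBot.coe_zero, add_zero, add_comm, WithBot.coe_nsmul]
        exact congrFun (congrFun h i) j
      rw [WithBot.add_left_inj hij, WithBot.coe_inj, smul_eq_zero] at hkx
      rw [hkx.resolve_left hk, WithBot.coe_zero, zero_tSmul]
    · push Not at hE
      funext i j
      simp [tSmul, hE]

theorem isAbelianOn_of_forall_eq_tSmul {S : Set Mat2} {E : Mat2}
    (hS : ∀ A ∈ S, ∃ l, A = tSmul l E) : IsAbelianOn S := by
  intro A hA B hB
  obtain ⟨l, rfl⟩ := hS A hA
  obtain ⟨m, rfl⟩ := hS B hB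
  simp only [tSmul_tMul, tMul_tSmul, tSmul_tSmul, add_comm l m]

theorem isTorsionFreeOn_of_forall_eq_tSmul {S : Set Mat2} {E : Mat2} (hE : tMul E E = E)
    (hS : ∀ A ∈ S, ∃ l, A = tSmul l E) : IsTorsionFreeOn S E := by
  intro A hA n hn
  obtain ⟨l, rfl⟩ := hS A hA
  rw [tpow_tSmul hE] at hn
  exact tSmul_eq_self_of_nsmul n.succ_ne_zero hn

theorem IsGroupWith.eq_tSmul_of_rankOne {G : Set Mat2} {E : Mat2} {u v : Fin 2 → Rb}
    (hG : IsGroupWith G E) (hE : ∀ i j, E i j = u i + v j) {A : Mat2} (hA : A ∈ G) :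
    ∃ l, A = tSmul l E := by
  refine ⟨_, Eq.trans ?_ (tMul_tMul_eq_tSmul_of_rankOne (A := A) hE)⟩
  rw [hG.id_tMul hA, hG.tMul_id hA]

def zeroDiag (b c : Rb) : Mat2 := ![![0, b], ![c, 0]]

lemma eq_zero_of_add_self {x : Rb} (h : x + x = x) (hx : x ≠ ⊥) : x = 0 := by
  lift x to ℝ using hx
  rw [← WithBot.coe_add, WithBot.coe_inj, add_eq_right] at h
  rw [h, WithBot.coe_zero]

lemma add_eq_right_of_add_add_eq {b c d : Rb} (h : c + b + c = c) (hbd : c + b ≤ d)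
    (hd : d + d ≤ d) : d + c = c := by
  induction c using WithBot.recBotCoe with
  | bot => exact WithBot.add_bot d
  | coe γ =>
    have hcb : ↑γ + b = 0 :=
      WithBot.add_right_cancel WithBot.coe_ne_bot (h.trans (zero_add _).symm)
    rw [hcb] at hbd
    have hd0 : d ≠ ⊥ := ne_bot_of_le_ne_bot (by simp) hbd
    have hd : d ≤ 0 := (WithBot.add_le_add_iff_left hd0).1 (by rwa [add_zero])
    rw [le_antisymm hd hbd, zero_add]

theorem rankOne_or_eq_zeroDiag_of_idempotent {E : Mat2} (hE : tMul E E = E) :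
    (∃ u v : Fin 2 → Rb, ∀ i j, E i j = u i + v j) ∨
      ∃ b c : Rb, b + c < 0 ∧ E = zeroDiag b c := by
  have q (i j : Fin 2) : max (E i 0 + E 0 j) (E i 1 + E 1 j) = E i j := by
    rw [← tMul_apply_fin_two, hE]
  have q00 := q 0 0
  have q10 := q 1 0
  have q11 := q 1 1
  by_cases hA : E 0 1 + E 1 0 = E 0 0
  · have h : E 1 1 + E 1 0 = E 1 0 := by
      rcases max_choice (E 1 0 + E 0 0) (E 1 1 + E 1 0) with h | h <;> rw [h] at q10
      · refine add_eq_right_of_add_add_eq ?_ ((le_max_left _ _).trans_eq q11)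
          ((le_max_right _ _).trans_eq q11)
        rwa [← hA, ← add_assoc] at q10
      · exact q10
    refine Or.inl ⟨![E 0 1, E 1 1], ![E 1 0, 0], ?_⟩
    intro i j
    fin_cases i <;> fin_cases j <;> simp [← hA, h]
  by_cases hB : E 1 0 + E 0 1 = E 1 1
  · have h : E 1 0 + E 0 0 = E 1 0 := by
      rcases max_choice (E 1 0 + E 0 0) (E 1 1 + E 1 0) with h | h <;> rw [h] at q10
      · exact q10
      · rw [add_comm]
        refine add_eq_right_of_add_add_eq (b := E 0 1) ?_ ?_ ((le_max_left _ _).trans_eq q00)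
        · rwa [← hB] at q10
        · rw [add_comm]; exact (le_max_right _ _).trans_eq q00
    refine Or.inl ⟨![0, E 1 0], ![E 0 0, E 0 1], ?_⟩
    intro i j
    fin_cases i <;> fin_cases j <;> simp [← hB, h]
  have hlt00 : E 0 1 + E 1 0 < E 0 0 := lt_of_le_of_ne ((le_max_right _ _).trans_eq q00) hA
  have hlt11 : E 1 0 + E 0 1 < E 1 1 := lt_of_le_of_ne ((le_max_left _ _).trans_eq q11) hB
  have h00 : E 0 0 = 0 :=
    eq_zero_of_add_self ((max_eq_iff.1 q00).resolve_right fun h => hA h.1).1 (ne_bot_of_gt hlt00)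
  have h11 : E 1 1 = 0 :=
    eq_zero_of_add_self ((max_eq_iff.1 q11).resolve_left fun h => hB h.1).1 (ne_bot_of_gt hlt11)
  refine Or.inr ⟨E 0 1, E 1 0, h00 ▸ hlt00, ?_⟩
  funext i j
  fin_cases i <;> fin_cases j <;> simp [zeroDiag, h00, h11]


def tDiag (p s : ℝ) : Mat2 := ![![↑p, ⊥], ![⊥, ↑s]]

def tAntidiag (q r : ℝ) : Mat2 := ![![⊥, ↑q], ![↑r, ⊥]]

section Monomial

variable (p s q r p' s' q' r' : ℝ) (b c : Rb)

theorem tDiag_tMul_tDiag : tMul (tDiag p s) (tDiag p' s') = tDiag (p + p') (s + s') := by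
  funext i j; fin_cases i <;> fin_cases j <;> simp [tMul_apply_fin_two, tDiag]

theorem tDiag_tMul_tAntidiag :
    tMul (tDiag p s) (tAntidiag q r) = tAntidiag (p + q) (s + r) := by
  funext i j; fin_cases i <;> fin_cases j <;> simp [tMul_apply_fin_two, tDiag, tAntidiag]

theorem tAntidiag_tMul_tDiag :
    tMul (tAntidiag q r) (tDiag p s) = tAntidiag (q + s) (r + p) := by
  funext i j; fin_cases i <;> fin_cases j <;> simp [tMul_apply_fin_two, tDiag, tAntidiag]

theorem tAntidiag_tMul_tAntidiag :
    tMul (tAntidiag q r) (tAntidiag q' r') = tDiag (q + r') (r + q') := by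
  funext i j; fin_cases i <;> fin_cases j <;> simp [tMul_apply_fin_two, tDiag, tAntidiag]

theorem tDiag_tMul_zeroDiag :
    tMul (tDiag p s) (zeroDiag b c) = ![![↑p, ↑p + b], ![↑s + c, ↑s]] := by
  funext i j; fin_cases i <;> fin_cases j <;> simp [tMul_apply_fin_two, tDiag, zeroDiag]

theorem zeroDiag_tMul_tDiag :
    tMul (zeroDiag b c) (tDiag p s) = ![![↑p, b + ↑s], ![c + ↑p, ↑s]] := by
  funext i j; fin_cases i <;> fin_cases j <;> simp [tMul_apply_fin_two, tDiag, zeroDiag]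

theorem tAntidiag_tMul_zeroDiag :
    tMul (tAntidiag q r) (zeroDiag b c) = ![![↑q + c, ↑q], ![↑r, ↑r + b]] := by
  funext i j; fin_cases i <;> fin_cases j <;> simp [tMul_apply_fin_two, tAntidiag, zeroDiag]

theorem zeroDiag_tMul_tAntidiag :
    tMul (zeroDiag b c) (tAntidiag q r) = ![![b + ↑r, ↑q], ![↑r, c + ↑q]] := by
  funext i j; fin_cases i <;> fin_cases j <;> simp [tMul_apply_fin_two, tAntidiag, zeroDiag]

end Monomial

def IsCentralFactor (M E A : Mat2) : Prop := tMul M E = A ∧ tMul E M = A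

theorem IsCentralFactor.mul {E M N A B : Mat2} (hE : tMul E E = E)
    (hA : IsCentralFactor M E A) (hB : IsCentralFactor N E B) :
    IsCentralFactor (tMul M N) E (tMul A B) := by
  obtain ⟨hMA, hEM⟩ := hA
  obtain ⟨hNB, hEN⟩ := hB
  constructor
  · rw [tMul_assoc, hNB, ← hMA, tMul_assoc, ← hEN, ← tMul_assoc E E N, hE]
  · rw [← tMul_assoc, hEM, ← hEN, ← tMul_assoc, ← hMA, tMul_assoc M E E, hE]

theorem IsCentralFactor.pow {E M A : Mat2} (hE : tMul E E = E) (hA : IsCentralFactor M E A)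
    (n : ℕ) : IsCentralFactor (tpow M n) E (tpow A n) := by
  induction n with
  | zero => exact hA
  | succ n ih => exact hA.mul hE ih

def evenPart (E : Mat2) : Set Mat2 := {A | ∃ p s : ℝ, IsCentralFactor (tDiag p s) E A}

def oddPart (E : Mat2) : Set Mat2 := {A | ∃ q r : ℝ, IsCentralFactor (tAntidiag q r) E A}

theorem tpow_tDiag (p s : ℝ) (n : ℕ) :
    tpow (tDiag p s) n = tDiag ((n + 1) • p) ((n + 1) • s) := by
  induction n with
  | zero => simp [tpow]
  | succ n ih => rw [tpow, ih, tDiag_tMul_tDiag, ← succ_nsmul', ← succ_nsmul']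

theorem isParityOn_of_graded {G X Y : Set Mat2} (hG : G ⊆ X ∪ Y) (hdisj : Disjoint X Y)
    (hXX : ∀ A ∈ X, ∀ B ∈ X, tMul A B ∈ X) (hXY : ∀ A ∈ X, ∀ B ∈ Y, tMul A B ∈ Y)
    (hYX : ∀ A ∈ Y, ∀ B ∈ X, tMul A B ∈ Y) (hYY : ∀ A ∈ Y, ∀ B ∈ Y, tMul A B ∈ X) :
    IsParityOn G (· ∈ X) := by
  have hnX {A : Mat2} (h : A ∈ Y) : A ∉ X := Set.disjoint_right.1 hdisj h
  intro A hA B hB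
  rcases hG hA with hA | hA <;> rcases hG hB with hB | hB
  · simp [hXX A hA B hB, hA, hB]
  · simp [hnX (hXY A hA B hB), hA, hnX hB]
  · simp [hnX (hYX A hA B hB), hnX hA, hB]
  · simp [hYY A hA B hB, hnX hA, hnX hB]

section ZeroDiag

variable {b c : Rb}

theorem disjoint_evenPart_oddPart (hbc : b + c < 0) :
    Disjoint (evenPart (zeroDiag b c)) (oddPart (zeroDiag b c)) := by
  rw [Set.disjoint_left]
  rintro A ⟨p, s, hA, -⟩ ⟨q, r, hA', -⟩
  have h := hA.trans hA'.symm
  rw [tDiag_tMul_zeroDiag, tAntidiag_tMul_zeroDiag] at h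
  have h00 : (p : Rb) = q + c := congrFun (congrFun h 0) 0
  have h01 : (p : Rb) + b = q := congrFun (congrFun h 0) 1
  have hq : (q : Rb) + (b + c) = q + 0 := by rw [add_zero, add_comm b, ← add_assoc, ← h00, h01]
  exact hbc.ne ((WithBot.add_left_inj WithBot.coe_ne_bot).1 hq)

theorem isParityOn_evenPart {G : Set Mat2} (hbc : b + c < 0)
    (hE : tMul (zeroDiag b c) (zeroDiag b c) = zeroDiag b c)
    (hG : G ⊆ evenPart (zeroDiag b c) ∪ oddPart (zeroDiag b c)) :
    IsParityOn G (· ∈ evenPart (zeroDiag b c)) := by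
  refine isParityOn_of_graded hG (disjoint_evenPart_oddPart hbc) ?_ ?_ ?_ ?_
  · rintro A ⟨p, s, hA⟩ B ⟨p', s', hB⟩
    exact ⟨_, _, tDiag_tMul_tDiag p s p' s' ▸ hA.mul hE hB⟩
  · rintro A ⟨p, s, hA⟩ B ⟨q, r, hB⟩
    exact ⟨_, _, tDiag_tMul_tAntidiag p s q r ▸ hA.mul hE hB⟩
  · rintro A ⟨q, r, hA⟩ B ⟨p, s, hB⟩
    exact ⟨_, _, tAntidiag_tMul_tDiag p s q r ▸ hA.mul hE hB⟩
  · rintro A ⟨q, r, hA⟩ B ⟨q', r', hB⟩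
    exact ⟨_, _, tAntidiag_tMul_tAntidiag q r q' r' ▸ hA.mul hE hB⟩

theorem isAbelianOn_evenPart (hE : tMul (zeroDiag b c) (zeroDiag b c) = zeroDiag b c) :
    IsAbelianOn (evenPart (zeroDiag b c)) := by
  rintro A ⟨p, s, hA⟩ B ⟨p', s', hB⟩
  rw [← (hA.mul hE hB).1, ← (hB.mul hE hA).1, tDiag_tMul_tDiag, tDiag_tMul_tDiag,
    add_comm p, add_comm s]

theorem isTorsionFreeOn_evenPart (hE : tMul (zeroDiag b c) (zeroDiag b c) = zeroDiag b c) :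
    IsTorsionFreeOn (evenPart (zeroDiag b c)) (zeroDiag b c) := by
  rintro A ⟨p, s, hA⟩ n hn
  have h := (hA.pow hE n).1
  rw [hn, tpow_tDiag, tDiag_tMul_zeroDiag] at h
  have hp : (n + 1) • p = 0 := WithBot.coe_eq_zero.1 (congrFun (congrFun h 0) 0)
  have hs : (n + 1) • s = 0 := WithBot.coe_eq_zero.1 (congrFun (congrFun h 1) 1)
  rw [smul_eq_zero] at hp hs
  rw [← hA.1, hp.resolve_left n.succ_ne_zero, hs.resolve_left n.succ_ne_zero, tDiag_tMul_zeroDiag]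
  funext i j; fin_cases i <;> fin_cases j <;> simp [zeroDiag]

end ZeroDiag

lemma le_add_of_add_le_of_add_eq_zero {p p' x y : Rb} (h : p + p' = 0) (hx : p' + x ≤ y) :
    x ≤ p + y :=
  calc x = p + (p' + x) := by rw [← add_assoc, h, zero_add]
    _ ≤ p + y := by gcongr

lemma add_le_add_of_add_le_add_of_add_eq_zero {p p' s s' x : Rb} (hp : p + p' = 0)
    (hs : s + s' = 0) (h : x + s' ≤ x + p') : x + p ≤ x + s :=
  calc x + p = (s + s') + (x + p) := by rw [hs, zero_add]
    _ = (s + p) + (x + s') := by abel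
    _ ≤ (s + p) + (x + p') := by gcongr
    _ = (p + p') + (x + s) := by abel
    _ = x + s := by rw [hp, zero_add]

section Units

variable {b c : Rb} {A B : Mat2}

theorem mem_evenPart_of_add_eq_zero (hbc : b + c < 0)
    (hEA : tMul (zeroDiag b c) A = A) (hAE : tMul A (zeroDiag b c) = A)
    (hEB : tMul (zeroDiag b c) B = B) (hBE : tMul B (zeroDiag b c) = B)
    (hAB : tMul A B = zeroDiag b c) (hBA : tMul B A = zeroDiag b c) (hp : A 0 0 + B 0 0 = 0) :
    A ∈ evenPart (zeroDiag b c) := by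
  have ea := add_le_of_tMul_eq hEA
  have ae := add_le_of_tMul_eq hAE
  have ab := add_le_of_tMul_eq hAB
  have ba := add_le_of_tMul_eq hBA
  have hp' : B 0 0 + A 0 0 = 0 := by rwa [add_comm]
  have hA01 : A 0 1 ≤ A 0 0 + b := le_add_of_add_le_of_add_eq_zero hp (ba 0 0 1)
  have hA10 : A 1 0 ≤ A 0 0 + c :=
    le_add_of_add_le_of_add_eq_zero hp ((add_comm _ _).trans_le (ab 1 0 0))
  have hB01 : B 0 1 ≤ B 0 0 + b := le_add_of_add_le_of_add_eq_zero hp' (ab 0 0 1)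
  have hB10 : B 1 0 ≤ B 0 0 + c :=
    le_add_of_add_le_of_add_eq_zero hp' ((add_comm _ _).trans_le (ba 1 0 0))
  have hlt : A 1 0 + B 0 1 < 0 :=
    calc A 1 0 + B 0 1 ≤ (A 0 0 + c) + (B 0 0 + b) := add_le_add hA10 hB01
      _ = (A 0 0 + B 0 0) + (b + c) := by abel
      _ < 0 := by rwa [hp, zero_add]
  have hs : A 1 1 + B 1 1 = 0 := by
    have h11 := tMul_apply_fin_two A B 1 1
    rw [hAB] at h11
    exact ((max_eq_iff.1 h11.symm).resolve_left fun h => hlt.ne h.1).1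
  have hps01 : b + A 0 0 ≤ b + A 1 1 := add_le_add_of_add_le_add_of_add_eq_zero hp hs
    (((add_le_of_tMul_eq hEB 0 1 1).trans hB01).trans_eq (add_comm _ _))
  have hps10 : c + A 0 0 ≤ c + A 1 1 := add_le_add_of_add_le_add_of_add_eq_zero hp hs
    ((add_comm _ _).trans_le (((add_le_of_tMul_eq hBE 1 1 0).trans hB10).trans_eq (add_comm _ _)))
  have h01 : A 0 1 = A 0 0 + b := le_antisymm hA01 (ae 0 0 1)
  have h01' : A 0 1 = b + A 1 1 :=
    le_antisymm (hA01.trans ((add_comm _ _).trans_le hps01)) (ea 0 1 1)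
  have h10 : A 1 0 = A 1 1 + c :=
    le_antisymm (hA10.trans (((add_comm _ _).trans_le hps10).trans_eq (add_comm _ _))) (ae 1 1 0)
  have h10' : A 1 0 = c + A 0 0 := le_antisymm (hA10.trans_eq (add_comm _ _)) (ea 1 0 0)
  obtain ⟨P, -, hP, -, -⟩ := WithBot.add_eq_coe.1 (hp.trans WithBot.coe_zero.symm)
  obtain ⟨S, -, hS, -, -⟩ := WithBot.add_eq_coe.1 (hs.trans WithBot.coe_zero.symm)
  rw [← hP] at h01 h10'
  rw [← hS] at h01' h10
  refine ⟨P, S, ?_, ?_⟩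
  · rw [tDiag_tMul_zeroDiag]
    funext i j; fin_cases i <;> fin_cases j
    exacts [hP, h01.symm, h10.symm, hS]
  · rw [zeroDiag_tMul_tDiag]
    funext i j; fin_cases i <;> fin_cases j
    exacts [hP, h01'.symm, h10'.symm, hS]

theorem mem_oddPart_of_add_eq_zero
    (hEA : tMul (zeroDiag b c) A = A) (hAE : tMul A (zeroDiag b c) = A)
    (hAB : tMul A B = zeroDiag b c) (hBA : tMul B A = zeroDiag b c)
    (hq : A 0 1 + B 1 0 = 0) (hr : A 1 0 + B 0 1 = 0) : A ∈ oddPart (zeroDiag b c) := by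
  have ea := add_le_of_tMul_eq hEA
  have ae := add_le_of_tMul_eq hAE
  have ab := add_le_of_tMul_eq hAB
  have ba := add_le_of_tMul_eq hBA
  have h00 : A 0 0 = A 0 1 + c :=
    le_antisymm (le_add_of_add_le_of_add_eq_zero hq (ba 1 0 0)) (ae 0 1 0)
  have h00' : A 0 0 = b + A 1 0 := le_antisymm
    ((le_add_of_add_le_of_add_eq_zero hr ((add_comm _ _).trans_le (ab 0 0 1))).trans_eq
      (add_comm _ _)) (ea 0 1 0)
  have h11 : A 1 1 = A 1 0 + b :=
    le_antisymm (le_add_of_add_le_of_add_eq_zero hr (ba 0 1 1)) (ae 1 0 1)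
  have h11' : A 1 1 = c + A 0 1 := le_antisymm
    ((le_add_of_add_le_of_add_eq_zero hq ((add_comm _ _).trans_le (ab 1 1 0))).trans_eq
      (add_comm _ _)) (ea 1 0 1)
  obtain ⟨Q, -, hQ, -, -⟩ := WithBot.add_eq_coe.1 (hq.trans WithBot.coe_zero.symm)
  obtain ⟨R, -, hR, -, -⟩ := WithBot.add_eq_coe.1 (hr.trans WithBot.coe_zero.symm)
  rw [← hQ] at h00 h11'
  rw [← hR] at h00' h11
  refine ⟨Q, R, ?_, ?_⟩
  · rw [tAntidiag_tMul_zeroDiag]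
    funext i j; fin_cases i <;> fin_cases j
    exacts [h00.symm, hQ, hR, h11.symm]
  · rw [zeroDiag_tMul_tAntidiag]
    funext i j; fin_cases i <;> fin_cases j
    exacts [h00'.symm, hQ, hR, h11'.symm]

theorem mem_evenPart_or_oddPart (hbc : b + c < 0)
    (hEA : tMul (zeroDiag b c) A = A) (hAE : tMul A (zeroDiag b c) = A)
    (hEB : tMul (zeroDiag b c) B = B) (hBE : tMul B (zeroDiag b c) = B)
    (hAB : tMul A B = zeroDiag b c) (hBA : tMul B A = zeroDiag b c) :
    A ∈ evenPart (zeroDiag b c) ∨ A ∈ oddPart (zeroDiag b c) := by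
  by_cases hp : A 0 0 + B 0 0 = 0
  · exact Or.inl (mem_evenPart_of_add_eq_zero hbc hEA hAE hEB hBE hAB hBA hp)
  have hab00 := tMul_apply_fin_two A B 0 0
  have hba00 := tMul_apply_fin_two B A 0 0
  rw [hAB] at hab00
  rw [hBA] at hba00
  refine Or.inr (mem_oddPart_of_add_eq_zero hEA hAE hAB hBA ?_ ?_)
  · exact ((max_eq_iff.1 hab00.symm).resolve_left fun h => hp h.1).1
  · rw [add_comm]
    exact ((max_eq_iff.1 hba00.symm).resolve_left fun h => hp ((add_comm _ _).trans h.1)).1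

end Units

theorem IsGroupWith.exists_parity {G : Set Mat2} {E : Mat2} (hG : IsGroupWith G E) :
    ∃ D : Mat2 → Prop, IsParityOn G D ∧ IsAbelianOn {A ∈ G | D A} ∧
      IsTorsionFreeOn {A ∈ G | D A} E := by
  rcases rankOne_or_eq_zeroDiag_of_idempotent hG.idem with ⟨u, v, hE⟩ | ⟨b, c, hbc, rfl⟩
  · have hS (A : Mat2) (hA : A ∈ {A ∈ G | True}) : ∃ l, A = tSmul l E :=
      hG.eq_tSmul_of_rankOne hE hA.1
    exact ⟨fun _ => True, fun _ _ _ _ => by simp, isAbelianOn_of_forall_eq_tSmul hS,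
      isTorsionFreeOn_of_forall_eq_tSmul hG.idem hS⟩
  · have hcover (A : Mat2) (hA : A ∈ G) :
        A ∈ evenPart (zeroDiag b c) ∪ oddPart (zeroDiag b c) := by
      obtain ⟨B, hB, hAB, hBA⟩ := hG.exists_inv hA
      exact mem_evenPart_or_oddPart hbc (hG.id_tMul hA) (hG.tMul_id hA) (hG.id_tMul hB)
        (hG.tMul_id hB) hAB hBA
    exact ⟨_, isParityOn_evenPart hbc hG.idem hcover,
      fun A hA B hB => isAbelianOn_evenPart hG.idem A hA.2 B hB.2,
      fun A hA => isTorsionFreeOn_evenPart hG.idem A hA.2⟩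

/-- every subsemigroup of `M₂(ℝ̄)` which is a group under `⊗` is either
torsion-free abelian or contains a torsion-free abelian subgroup of index `2`;
consequently, every abstract group admitting a faithful representation by `2 × 2`
tropical matrices is torsion-free abelian or has a torsion-free abelian subgroup of
index `2`. -/
theorem subgroups_virtually_abelian :
    (∀ (G : Set Mat2) (E : Mat2), IsGroupWith G E →
      (IsAbelianOn G ∧ IsTorsionFreeOn G E) ∨
        (∃ H : Set Mat2, H ⊆ G ∧ IsGroupWith H E ∧ IsAbelianOn H ∧ IsTorsionFreeOn H E ∧
          ∃ g ∈ G, g ∉ H ∧ ∀ x ∈ G, x ∈ H ∨ ∃ h ∈ H, x = tMul g h)) ∧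
    (∀ (Γ : Type) [inst : Group Γ],
      (∃ f : Γ → Mat2, Function.Injective f ∧ ∀ a b : Γ, f (a * b) = tMul (f a) (f b)) →
        ((∀ a b : Γ, a * b = b * a) ∧ Monoid.IsTorsionFree Γ) ∨
          (∃ H : Subgroup Γ, H.index = 2 ∧ (∀ a b : H, a * b = b * a) ∧
            Monoid.IsTorsionFree H)) := by
  refine ⟨fun G E hG => ?_, fun Γ _ ⟨f, hf, hmul⟩ => ?_⟩
  · obtain ⟨D, hD, hab, htf⟩ := hG.exists_parity
    exact hG.abelian_or_index_two hD hab htf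
  · obtain ⟨D, hD, hab, htf⟩ := (isGroupWith_range hmul).exists_parity
    exact abelian_or_index_two_of_injective hf hmul hD hab htf
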